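/- arXiv:2511.04889 — 4 statements merged into one kernel-verified Lean document; each statement's English description precedes it below -/
import Mathlib

section
/- Let n ≥ 5, let V be a ℂ-vector space with dim_ℂ V = n−2, and let p : Fin(n−1) → V be in linear general position. Then the hyperplanes {H_S : S ⊆ Fin(n−1), |S| = n−3} are in hyperbolic-imbedding configuration: for every two-dimensional ℂ-subspace L ≤ V, there exist three pairwise distinct one-dimensional subspaces ℓ₁, ℓ₂, ℓ₃ ≤ L such that for each k ∈ {1,2,3} there is a subset S_k ⊆ Fin(n−1) with |S_k| = n−3, ℓ_k ≤ H_{S_k}, and L ≰ H_{S_k}. (Equivalently: every projective line in ℙ^{n−3} meets the union of those arrangement hyperplanes not containing it in at least three points.) -/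
open Module Submodule Finset

/-- hyperbolic-imbedding configuration of the arrangement of spans of
(n-3)-element subsets of n-1 points in linear general position in V ≅ ℂ^{n-2}. -/
theorem hyperbolic_imbedding_configuration
    (n : ℕ) (hn : 5 ≤ n) (V : Type*) [AddCommGroup V] [Module ℂ V]
    [FiniteDimensional ℂ V] (hdim : Module.finrank ℂ V = n - 2)
    (p : Fin (n - 1) → V)
    (hgen : ∀ T : Finset (Fin (n - 1)), T.card = n - 2 →
      LinearIndependent ℂ (fun i : T => p (i : Fin (n - 1)))) :
    ∀ L : Submodule ℂ V, Module.finrank ℂ L = 2 →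
      ∃ ℓ : Fin 3 → Submodule ℂ V, Function.Injective ℓ ∧
        ∀ k : Fin 3, Module.finrank ℂ (ℓ k) = 1 ∧ ℓ k ≤ L ∧
          ∃ S : Finset (Fin (n - 1)), S.card = n - 3 ∧
            ℓ k ≤ Submodule.span ℂ (p '' (S : Set (Fin (n - 1)))) ∧
            ¬ L ≤ Submodule.span ℂ (p '' (S : Set (Fin (n - 1)))) := by
  intro L hL
  -- basic index bookkeeping
  have hn1 : 0 < n - 1 := by omega
  set z : Fin (n - 1) := ⟨0, hn1⟩ with hz
  set T : Finset (Fin (n - 1)) := Finset.univ.erase z with hTdef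
  have hzT : z ∉ T := Finset.notMem_erase z _
  have hTcard : T.card = n - 2 := by
    rw [hTdef, Finset.card_erase_of_mem (Finset.mem_univ z), Finset.card_univ,
      Fintype.card_fin]
    omega
  -- independence of subfamilies
  have hsub : ∀ A B : Finset (Fin (n - 1)), A ⊆ B → B.card = n - 2 →
      LinearIndependent ℂ (fun i : A => p (i : Fin (n - 1))) := by
    intro A B hAB hB
    refine (hgen B hB).comp (fun (i : {x // x ∈ A}) => (⟨i.1, hAB i.2⟩ : {x // x ∈ B})) ?_
    rintro ⟨i, hi⟩ ⟨j, hj⟩ h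
    simpa using h
  -- finrank of spans of independent subfamilies
  have hspanA : ∀ A : Finset (Fin (n - 1)),
      LinearIndependent ℂ (fun i : A => p (i : Fin (n - 1))) →
      Module.finrank ℂ (span ℂ (p '' (A : Set (Fin (n - 1))))) = A.card := by
    intro A hA
    have h1 := finrank_span_eq_card hA
    have h2 : Set.range (fun i : A => p (i : Fin (n - 1))) = p '' (A : Set (Fin (n - 1))) := by
      ext x
      simp [Set.mem_image]
    rw [← h2, h1, Fintype.card_coe]
  -- the basis from the first n-2 points
  have hliT := hgen T hTcard
  have hTne : T.Nonempty := Finset.card_pos.mp (by rw [hTcard]; omega)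
  haveI : Nonempty { x // x ∈ T } := Finset.Nonempty.to_subtype hTne
  let b : Basis T ℂ V := basisOfLinearIndependentOfCardEqFinrank hliT
    (by rw [Fintype.card_coe, hTcard, hdim])
  have hb : ∀ s : T, b s = p (s : Fin (n - 1)) := by
    intro s
    rw [show ⇑b = fun i : T => p (i : Fin (n - 1)) from
      coe_basisOfLinearIndependentOfCardEqFinrank hliT _]
  have hcoord0 : ∀ s t : T, s ≠ t → b.coord t (p (s : Fin (n - 1))) = 0 := by
    intro s t hst
    rw [← hb s, Basis.coord_apply, b.repr_self, Finsupp.single_apply]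
    simp [hst]
  -- all coordinates of p z are nonzero
  have hcne : ∀ t : T, b.coord t (p z) ≠ 0 := by
    intro t h0
    have hmem : p z ∈ span ℂ (p '' ((T.erase (t : Fin (n - 1))) : Set (Fin (n - 1)))) := by
      refine span_mono ?_ (b.mem_span_repr_support (p z))
      rintro x ⟨i, hi, rfl⟩
      refine ⟨(i : Fin (n - 1)), ?_, (hb i).symm⟩
      have hit : i ≠ t := by
        intro h; subst h
        exact (Finsupp.mem_support_iff.mp hi) h0
      exact Finset.mem_coe.mpr (Finset.mem_erase.mpr
        ⟨fun h => hit (Subtype.ext h), i.2⟩)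
    have htT : (t : Fin (n - 1)) ∈ T := t.2
    set T' : Finset (Fin (n - 1)) := insert z (T.erase (t : Fin (n - 1))) with hT'
    have hT'card : T'.card = n - 2 := by
      rw [Finset.card_insert_of_notMem (fun h => hzT (Finset.mem_of_mem_erase h)),
        Finset.card_erase_of_mem htT, hTcard]
      omega
    have hli' := hgen _ hT'card
    have hbig : Module.finrank ℂ
        (span ℂ (p '' (T' : Set (Fin (n - 1))))) = n - 2 := by
      rw [hspanA _ hli', hT'card]
    have hle : span ℂ (p '' (T' : Set (Fin (n - 1)))) ≤
        span ℂ (p '' ((T.erase (t : Fin (n - 1))) : Set (Fin (n - 1)))) := by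
      rw [span_le]
      rintro x ⟨i, hi, rfl⟩
      have hi' : i ∈ T' := Finset.mem_coe.mp hi
      rcases Finset.mem_insert.mp hi' with h | h
      · subst h; exact hmem
      · exact subset_span ⟨i, Finset.mem_coe.mpr h, rfl⟩
    have hsmall : Module.finrank ℂ
        (span ℂ (p '' ((T.erase (t : Fin (n - 1))) : Set (Fin (n - 1))))) = n - 3 := by
      rw [hspanA _ (hsub _ T (Finset.erase_subset _ _) hTcard),
        Finset.card_erase_of_mem htT, hTcard]
      omega
    have hmono := Submodule.finrank_mono hle
    rw [hbig, hsmall] at hmono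
    omega
  -- a basis of L
  let bL : Basis (Fin 2) ℂ L := Module.finBasisOfFinrankEq ℂ L hL
  set u : V := (bL 0 : V) with hu
  set w : V := (bL 1 : V) with hw
  have huL : u ∈ L := (bL 0).2
  have hwL : w ∈ L := (bL 1).2
  have huw : ∀ a c : ℂ, a • u + c • w = 0 → a = 0 ∧ c = 0 := by
    intro a c h
    have h2 : a • bL 0 + c • bL 1 = (0 : L) := by
      apply Subtype.coe_injective
      push_cast
      exact h
    have h3 := Fintype.linearIndependent_iff.mp bL.linearIndependent ![a, c] (by
      rw [Fin.sum_univ_two]; simpa using h2)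
    exact ⟨h3 0, h3 1⟩
  have hspanL : ∀ x ∈ L, ∃ a c : ℂ, x = a • u + c • w := by
    intro x hx
    refine ⟨bL.repr ⟨x, hx⟩ 0, bL.repr ⟨x, hx⟩ 1, ?_⟩
    have hsum := bL.sum_repr ⟨x, hx⟩
    rw [Fin.sum_univ_two] at hsum
    calc x = ((bL.repr ⟨x, hx⟩ 0 • bL 0 + bL.repr ⟨x, hx⟩ 1 • bL 1 : L) : V) := by
            rw [hsum]
      _ = _ := by push_cast; rfl
  have hune : u ≠ 0 := by
    intro h
    exact bL.ne_zero 0 (Subtype.coe_injective h)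
  -- find two coordinates independent on L
  obtain ⟨t₁, t₂, hD⟩ : ∃ t₁ t₂ : T,
      b.coord t₁ u * b.coord t₂ w - b.coord t₁ w * b.coord t₂ u ≠ 0 := by
    by_contra hcon
    push_neg at hcon
    obtain ⟨t₀, ht₀⟩ : ∃ t₀ : T, b.coord t₀ u ≠ 0 := by
      by_contra h0
      push_neg at h0
      exact hune ((b.forall_coord_eq_zero_iff).mp h0)
    have hv : ∀ s : T, b.coord s (b.coord t₀ u • w - b.coord t₀ w • u) = 0 := by
      intro s
      have hcs := hcon s t₀
      simp only [map_sub, map_smul, smul_eq_mul]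
      linear_combination -hcs
    have hz0 : b.coord t₀ u • w - b.coord t₀ w • u = 0 :=
      (b.forall_coord_eq_zero_iff).mp hv
    have h4 : -(b.coord t₀ w) • u + b.coord t₀ u • w = 0 := by
      rw [neg_smul, add_comm, ← sub_eq_add_neg]
      exact hz0
    exact ht₀ (huw _ _ h4).2
  have ht12 : (t₁ : Fin (n - 1)) ≠ (t₂ : Fin (n - 1)) := by
    intro h
    apply hD
    have h5 : t₁ = t₂ := Subtype.ext h
    rw [h5]; ring
  set φ₁ : V →ₗ[ℂ] ℂ := b.coord t₁ with hφ₁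
  set φ₂ : V →ₗ[ℂ] ℂ := b.coord t₂ with hφ₂
  set c₁ : ℂ := φ₁ (p z) with hc₁def
  set c₂ : ℂ := φ₂ (p z) with hc₂def
  have hc₁ : c₁ ≠ 0 := hcne t₁
  have hc₂ : c₂ ≠ 0 := hcne t₂
  have ht1z : (t₁ : Fin (n - 1)) ≠ z := fun h => hzT (h ▸ t₁.2)
  have ht2z : (t₂ : Fin (n - 1)) ≠ z := fun h => hzT (h ▸ t₂.2)
  -- the three functionals
  set α : Fin 3 → ℂ := ![1, 0, c₂] with hα
  set β : Fin 3 → ℂ := ![0, 1, -c₁] with hβ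
  set Φ : Fin 3 → (V →ₗ[ℂ] ℂ) := fun k => α k • φ₁ + β k • φ₂ with hΦ
  have hΦapp : ∀ (k : Fin 3) (x : V), Φ k x = α k * φ₁ x + β k * φ₂ x := by
    intro k x; simp [hΦ]
  have hdet : ∀ k l : Fin 3, k ≠ l → α k * β l - α l * β k ≠ 0 := by
    intro k l hkl
    fin_cases k <;> fin_cases l <;>
      simp only [hα, hβ, Matrix.cons_val_zero, Matrix.cons_val_one, Matrix.head_cons,
        Matrix.cons_val_two, Matrix.tail_cons] <;>
      first
        | exact absurd rfl hkl
        | simpa using hc₁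
        | simpa using hc₂
        | norm_num
  have hαβ : ∀ k : Fin 3, α k ≠ 0 ∨ β k ≠ 0 := by
    intro k
    fin_cases k
    · left; simp [hα]
    · right; simp [hβ]
    · left; simpa [hα] using hc₂
  -- each Φ k is nonzero on L
  have hΦL : ∀ k : Fin 3, Φ k u ≠ 0 ∨ Φ k w ≠ 0 := by
    intro k
    by_contra hcon
    push_neg at hcon
    obtain ⟨h1, h2⟩ := hcon
    rw [hΦapp] at h1 h2
    have ha : α k = 0 := by
      have h3 : α k * (φ₁ u * φ₂ w - φ₁ w * φ₂ u) = 0 := by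
        linear_combination φ₂ w * h1 - φ₂ u * h2
      exact (mul_eq_zero.mp h3).resolve_right hD
    have hbb : β k = 0 := by
      have h3 : β k * (φ₁ u * φ₂ w - φ₁ w * φ₂ u) = 0 := by
        linear_combination φ₁ u * h2 - φ₁ w * h1
      exact (mul_eq_zero.mp h3).resolve_right hD
    rcases hαβ k with h | h
    · exact h ha
    · exact h hbb
  have hΦex : ∀ k : Fin 3, ∃ x ∈ L, Φ k x ≠ 0 := by
    intro k
    rcases hΦL k with h | h
    · exact ⟨u, huL, h⟩
    · exact ⟨w, hwL, h⟩
  -- the three hyperplane index sets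
  set A₀ : Finset (Fin (n - 1)) := Finset.univ \ {(t₁ : Fin (n - 1)), z} with hA₀
  set A₁ : Finset (Fin (n - 1)) := Finset.univ \ {(t₂ : Fin (n - 1)), z} with hA₁
  set A₂ : Finset (Fin (n - 1)) := Finset.univ \ {(t₁ : Fin (n - 1)), (t₂ : Fin (n - 1))} with hA₂
  have hA₀mem : ∀ s : Fin (n - 1), s ∈ A₀ ↔ s ≠ (t₁ : Fin (n - 1)) ∧ s ≠ z := by
    intro s; rw [hA₀]; simp [not_or]
  have hA₁mem : ∀ s : Fin (n - 1), s ∈ A₁ ↔ s ≠ (t₂ : Fin (n - 1)) ∧ s ≠ z := by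
    intro s; rw [hA₁]; simp [not_or]
  have hA₂mem : ∀ s : Fin (n - 1), s ∈ A₂ ↔ s ≠ (t₁ : Fin (n - 1)) ∧ s ≠ (t₂ : Fin (n - 1)) := by
    intro s; rw [hA₂]; simp [not_or]
  set S : Fin 3 → Finset (Fin (n - 1)) := ![A₀, A₁, A₂] with hS
  -- cardinalities
  have hcard' : ∀ (a b : Fin (n - 1)), a ≠ b →
      (Finset.univ \ {a, b}).card = n - 3 := by
    intro a b hab
    rw [Finset.card_sdiff_of_subset (Finset.subset_univ _), Finset.card_univ, Fintype.card_fin,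
      Finset.card_pair hab]
    omega
  have hScard : ∀ k : Fin 3, (S k).card = n - 3 := by
    intro k
    fin_cases k
    · exact hcard' _ _ ht1z
    · exact hcard' _ _ ht2z
    · exact hcard' _ _ ht12
  -- vanishing of Φ k on the points of S k
  have hvanish : ∀ k : Fin 3, ∀ s ∈ S k, Φ k (p s) = 0 := by
    intro k
    fin_cases k
    · intro s hs
      obtain ⟨hs1, hs2⟩ := (hA₀mem s).mp hs
      have hsT : s ∈ T := Finset.mem_erase.mpr ⟨hs2, Finset.mem_univ s⟩
      have h1 : φ₁ (p s) = 0 := hcoord0 ⟨s, hsT⟩ t₁ (fun h => hs1 (congrArg Subtype.val h))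
      rw [hΦapp, h1]
      simp [hα, hβ]
    · intro s hs
      obtain ⟨hs1, hs2⟩ := (hA₁mem s).mp hs
      have hsT : s ∈ T := Finset.mem_erase.mpr ⟨hs2, Finset.mem_univ s⟩
      have h2 : φ₂ (p s) = 0 := hcoord0 ⟨s, hsT⟩ t₂ (fun h => hs1 (congrArg Subtype.val h))
      rw [hΦapp, h2]
      simp [hα, hβ]
    · intro s hs
      obtain ⟨hs1, hs2⟩ := (hA₂mem s).mp hs
      by_cases hsz : s = z
      · rw [hΦapp, hsz, ← hc₁def, ← hc₂def]
        simp [hα, hβ]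
        ring
      · have hsT : s ∈ T := Finset.mem_erase.mpr ⟨hsz, Finset.mem_univ s⟩
        have h1 : φ₁ (p s) = 0 := hcoord0 ⟨s, hsT⟩ t₁ (fun h => hs1 (congrArg Subtype.val h))
        have h2 : φ₂ (p s) = 0 := hcoord0 ⟨s, hsT⟩ t₂ (fun h => hs2 (congrArg Subtype.val h))
        rw [hΦapp, h1, h2]
        ring
  -- independence of the families indexed by the S k
  have hindep : ∀ k : Fin 3, LinearIndependent ℂ (fun i : (S k) => p (i : Fin (n - 1))) := by
    intro k
    fin_cases k
    · refine hsub _ T ?_ hTcard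
      intro s hs
      exact Finset.mem_erase.mpr ⟨((hA₀mem s).mp hs).2, Finset.mem_univ s⟩
    · refine hsub _ T ?_ hTcard
      intro s hs
      exact Finset.mem_erase.mpr ⟨((hA₁mem s).mp hs).2, Finset.mem_univ s⟩
    · refine hsub _ (Finset.univ.erase (t₂ : Fin (n - 1))) ?_ ?_
      · intro s hs
        exact Finset.mem_erase.mpr ⟨((hA₂mem s).mp hs).2, Finset.mem_univ s⟩
      · rw [Finset.card_erase_of_mem (Finset.mem_univ _), Finset.card_univ, Fintype.card_fin]
        omega
  -- finrank of the kernels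
  have hΦne : ∀ k : Fin 3, Module.finrank ℂ (LinearMap.ker (Φ k)) = n - 3 := by
    intro k
    have hrn := LinearMap.finrank_range_add_finrank_ker (Φ k)
    have hr : Module.finrank ℂ (LinearMap.range (Φ k)) = 1 := by
      have htop : LinearMap.range (Φ k) = ⊤ := by
        obtain ⟨x, hx, hΦx⟩ := hΦex k
        rw [LinearMap.range_eq_top]
        intro e
        refine ⟨(e / Φ k x) • x, ?_⟩
        rw [map_smul, smul_eq_mul]
        field_simp
      rw [htop, finrank_top, Module.finrank_self]
    rw [hr, hdim] at hrn
    omega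
  -- the spans are exactly the kernels
  have hspanS : ∀ k : Fin 3,
      span ℂ (p '' ((S k) : Set (Fin (n - 1)))) = LinearMap.ker (Φ k) := by
    intro k
    have hle : span ℂ (p '' ((S k) : Set (Fin (n - 1)))) ≤ LinearMap.ker (Φ k) := by
      rw [span_le]
      rintro x ⟨i, hi, rfl⟩
      exact LinearMap.mem_ker.mpr (hvanish k i (Finset.mem_coe.mp hi))
    refine Submodule.eq_of_le_of_finrank_le hle ?_
    rw [hΦne k, hspanA _ (hindep k), hScard k]
  -- the three lines
  set ℓf : Fin 3 → Submodule ℂ V := fun k => L ⊓ LinearMap.ker (Φ k) with hℓf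
  have hrank1 : ∀ k : Fin 3, Module.finrank ℂ (ℓf k) = 1 := by
    intro k
    have hltL : ℓf k < L := by
      refine lt_of_le_of_ne inf_le_left ?_
      intro h
      obtain ⟨x, hx, hΦx⟩ := hΦex k
      have hxm : x ∈ ℓf k := h ▸ hx
      exact hΦx (LinearMap.mem_ker.mp (Submodule.mem_inf.mp hxm).2)
    have hlt2 : Module.finrank ℂ (ℓf k) < 2 := by
      have := Submodule.finrank_lt_finrank_of_lt hltL
      omega
    set x0 : V := (Φ k w) • u - (Φ k u) • w with hx0
    have hx0L : x0 ∈ L := sub_mem (smul_mem _ _ huL) (smul_mem _ _ hwL)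
    have hx0k : x0 ∈ LinearMap.ker (Φ k) := by
      rw [LinearMap.mem_ker, hx0, map_sub, map_smul, map_smul, smul_eq_mul, smul_eq_mul]
      ring
    have hx0ne : x0 ≠ 0 := by
      intro h
      have h4 : (Φ k w) • u + (-(Φ k u)) • w = 0 := by
        rw [neg_smul, ← sub_eq_add_neg]; exact h
      obtain ⟨ha, hb⟩ := huw _ _ h4
      rcases hΦL k with hh | hh
      · exact hh (neg_eq_zero.mp hb)
      · exact hh ha
    have hne : ℓf k ≠ ⊥ := by
      intro h
      have : x0 ∈ ℓf k := Submodule.mem_inf.mpr ⟨hx0L, hx0k⟩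
      rw [h, Submodule.mem_bot] at this
      exact hx0ne this
    have hpos : Module.finrank ℂ (ℓf k) ≠ 0 := fun h =>
      hne (Submodule.finrank_eq_zero.mp h)
    omega
  -- injectivity
  have hinj : Function.Injective ℓf := by
    intro k l hkl
    by_contra hne
    have hbot : ℓf k ≠ ⊥ := by
      intro h
      have h1 := hrank1 k
      rw [h, finrank_bot] at h1
      omega
    obtain ⟨x, hxm, hx0⟩ := Submodule.exists_mem_ne_zero_of_ne_bot hbot
    have hxL : x ∈ L := (Submodule.mem_inf.mp hxm).1
    have h1 : Φ k x = 0 := LinearMap.mem_ker.mp (Submodule.mem_inf.mp hxm).2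
    have h2 : Φ l x = 0 := by
      have hxm2 : x ∈ ℓf l := hkl ▸ hxm
      exact LinearMap.mem_ker.mp (Submodule.mem_inf.mp hxm2).2
    rw [hΦapp] at h1 h2
    have he := hdet k l hne
    have hp1 : φ₁ x = 0 := by
      have h3 : (α k * β l - α l * β k) * φ₁ x = 0 := by
        linear_combination β l * h1 - β k * h2
      exact (mul_eq_zero.mp h3).resolve_left he
    have hp2 : φ₂ x = 0 := by
      have h3 : (α k * β l - α l * β k) * φ₂ x = 0 := by
        linear_combination α k * h2 - α l * h1
      exact (mul_eq_zero.mp h3).resolve_left he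
    obtain ⟨a, c, hac⟩ := hspanL x hxL
    have h1' : a * φ₁ u + c * φ₁ w = 0 := by
      rw [hac, map_add, map_smul, map_smul, smul_eq_mul, smul_eq_mul] at hp1
      exact hp1
    have h2' : a * φ₂ u + c * φ₂ w = 0 := by
      rw [hac, map_add, map_smul, map_smul, smul_eq_mul, smul_eq_mul] at hp2
      exact hp2
    have ha : a = 0 := by
      have h3 : a * (φ₁ u * φ₂ w - φ₁ w * φ₂ u) = 0 := by
        linear_combination φ₂ w * h1' - φ₁ w * h2'
      exact (mul_eq_zero.mp h3).resolve_right hD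
    have hc : c = 0 := by
      have h3 : c * (φ₁ u * φ₂ w - φ₁ w * φ₂ u) = 0 := by
        linear_combination φ₁ u * h2' - φ₂ u * h1'
      exact (mul_eq_zero.mp h3).resolve_right hD
    apply hx0
    rw [hac, ha, hc, zero_smul, zero_smul, add_zero]
  -- assemble
  refine ⟨ℓf, hinj, fun k => ⟨hrank1 k, inf_le_left, S k, hScard k, ?_, ?_⟩⟩
  · rw [hspanS k]
    exact inf_le_right
  · rw [hspanS k]
    intro hle
    obtain ⟨x, hx, hΦx⟩ := hΦex k
    exact hΦx (LinearMap.mem_ker.mp (hle hx))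
end

section
/- Let n ≥ 5, let V be a ℂ-vector space with dim_ℂ V = n−2, and let p : Fin(n−1) → V be in linear general position. Then the hyperplanes {H_S : S ⊆ Fin(n−1), |S| = n−3} are in hyperbolic configuration: for every two-dimensional ℂ-subspace L ≤ V, there exist three pairwise distinct one-dimensional subspaces ℓ₁, ℓ₂, ℓ₃ ≤ L such that for each k ∈ {1,2,3} there is a subset S_k ⊆ Fin(n−1) with |S_k| = n−3 and ℓ_k ≤ H_{S_k}. (Equivalently: every projective line in ℙ^{n−3} meets the union of the arrangement hyperplanes in at least three points.) -/
/-- hyperbolic configuration of the arrangement of spans of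
(n-3)-element subsets of n-1 points in linear general position in V ≅ ℂ^{n-2}. -/
theorem hyperbolic_configuration
    (n : ℕ) (hn : 5 ≤ n) (V : Type*) [AddCommGroup V] [Module ℂ V]
    [FiniteDimensional ℂ V] (hdim : Module.finrank ℂ V = n - 2)
    (p : Fin (n - 1) → V)
    (hgen : ∀ T : Finset (Fin (n - 1)), T.card = n - 2 →
      LinearIndependent ℂ (fun i : T => p (i : Fin (n - 1)))) :
    ∀ L : Submodule ℂ V, Module.finrank ℂ L = 2 →
      ∃ ℓ : Fin 3 → Submodule ℂ V, Function.Injective ℓ ∧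
        ∀ k : Fin 3, Module.finrank ℂ (ℓ k) = 1 ∧ ℓ k ≤ L ∧
          ∃ S : Finset (Fin (n - 1)), S.card = n - 3 ∧
            ℓ k ≤ Submodule.span ℂ (p '' (S : Set (Fin (n - 1)))) := by
  intro L hL
  classical
  have hcard : Fintype.card (Fin (n-1)) = n - 1 := Fintype.card_fin _
  set P : Submodule ℂ V → Prop := fun l => Module.finrank ℂ l = 1 ∧ l ≤ L ∧
      ∃ S : Finset (Fin (n - 1)), S.card = n - 3 ∧
        l ≤ Submodule.span ℂ (p '' (S : Set (Fin (n - 1)))) with hPdef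
  suffices h3 : ∃ l1 l2 l3 : Submodule ℂ V,
      l1 ≠ l2 ∧ l1 ≠ l3 ∧ l2 ≠ l3 ∧ P l1 ∧ P l2 ∧ P l3 by
    obtain ⟨l1, l2, l3, h12, h13, h23, q1, q2, q3⟩ := h3
    refine ⟨![l1, l2, l3], ?_, ?_⟩
    · intro x y hxy
      fin_cases x <;> fin_cases y <;>
        simp only [Matrix.cons_val_zero, Matrix.cons_val_one, Matrix.head_cons,
          Matrix.cons_val_two, Matrix.tail_cons] at hxy <;>
        first
          | rfl
          | (exact absurd hxy h12) | (exact absurd hxy h13) | (exact absurd hxy h23)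
          | (exact absurd hxy.symm h12) | (exact absurd hxy.symm h13)
          | (exact absurd hxy.symm h23)
    · intro k
      fin_cases k <;>
        simp only [Matrix.cons_val_zero, Matrix.cons_val_one, Matrix.head_cons,
          Matrix.cons_val_two, Matrix.tail_cons]
      exacts [q1, q2, q3]
  -- basic index elements
  have hpos : 0 < n - 1 := by omega
  set i0 : Fin (n-1) := ⟨0, by omega⟩ with hi0
  set i1 : Fin (n-1) := ⟨1, by omega⟩ with hi1
  have h01 : i0 ≠ i1 := by
    simp [hi0, hi1, Fin.ext_iff]
  -- linear independence of any subfamily of size ≤ n-2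
  have li_sub : ∀ T : Finset (Fin (n-1)), T.card ≤ n - 2 →
      LinearIndependent ℂ (fun i : T => p (i : Fin (n-1))) := by
    intro T hTc
    obtain ⟨T', hTT', hT'⟩ := Finset.exists_superset_card_eq hTc (by rw [hcard]; omega)
    have li := hgen T' hT'
    have := li.comp (fun x : {x // x ∈ T} => (⟨x.1, hTT' x.2⟩ : {x // x ∈ T'}))
      (fun x y h => by apply Subtype.ext; simpa using congrArg Subtype.val h)
    exact this
  -- vanishing lemma: a relation with one zero coefficient is zero
  have vanish : ∀ (b : Fin (n-1) → ℂ) (j : Fin (n-1)), b j = 0 →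
      (∑ i, b i • p i) = 0 → ∀ i, b i = 0 := by
    intro b j hbj hsum i
    set T : Finset (Fin (n-1)) := Finset.univ.erase j with hT
    have hTc : T.card = n - 2 := by
      rw [hT, Finset.card_erase_of_mem (Finset.mem_univ j), Finset.card_univ, hcard]
      omega
    have li := hgen T hTc
    have hsum2 : (∑ x ∈ T, b x • p x) = 0 := by
      rw [← hsum]
      refine Finset.sum_subset (Finset.subset_univ T) ?_
      intro x _ hx
      have : x = j := by
        by_contra hxj
        exact hx (Finset.mem_erase.mpr ⟨hxj, Finset.mem_univ x⟩)
      rw [this, hbj, zero_smul]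
    have hall : ∀ x : T, b x = 0 := by
      apply Fintype.linearIndependent_iff.mp li (fun x : T => b x)
      rw [Finset.sum_coe_sort T (fun x => b x • p x)]
      exact hsum2
    by_cases hij : i = j
    · rw [hij]; exact hbj
    · exact hall ⟨i, Finset.mem_erase.mpr ⟨hij, Finset.mem_univ i⟩⟩
  -- the universal relation a with all coefficients nonzero
  have hnli : ¬ LinearIndependent ℂ p := by
    intro h
    have := h.fintype_card_le_finrank
    rw [hcard, hdim] at this
    omega
  obtain ⟨a, hasum, iex, hiex⟩ := Fintype.not_linearIndependent_iff.mp hnli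
  have ha : ∀ i, a i ≠ 0 := by
    intro j hj
    exact hiex (vanish a j hj hasum iex)
  -- the points span V
  have hspan : Submodule.span ℂ (Set.range p) = ⊤ := by
    set T : Finset (Fin (n-1)) := Finset.univ.erase i0 with hT
    have hTc : T.card = n - 2 := by
      rw [hT, Finset.card_erase_of_mem (Finset.mem_univ i0), Finset.card_univ, hcard]
      omega
    have li := hgen T hTc
    haveI : Nonempty T := Finset.nonempty_coe_sort.mpr (Finset.card_pos.mp (by omega))
    have htop := li.span_eq_top_of_card_eq_finrank (by rw [Fintype.card_coe, hTc, hdim])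
    refine top_unique ?_
    rw [← htop]
    exact Submodule.span_mono (by rintro _ ⟨i, rfl⟩; exact ⟨i, rfl⟩)
  have hrep : ∀ v : V, ∃ c : Fin (n-1) → ℂ, (∑ i, c i • p i) = v := by
    intro v
    exact (Submodule.mem_span_range_iff_exists_fun ℂ).mp (by rw [hspan]; trivial)
  -- every relation is a multiple of a
  have hrelmul : ∀ b : Fin (n-1) → ℂ, (∑ i, b i • p i) = 0 →
      ∃ s : ℂ, ∀ i, b i = s * a i := by
    intro b hb
    refine ⟨b i0 / a i0, ?_⟩
    set s := b i0 / a i0 with hs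
    have h0 : b i0 - s * a i0 = 0 := by
      rw [hs, div_mul_cancel₀ _ (ha i0), sub_self]
    have hsum : (∑ i, (b i - s * a i) • p i) = 0 := by
      have : (∑ i, (b i - s * a i) • p i)
          = (∑ i, b i • p i) - s • (∑ i, a i • p i) := by
        rw [Finset.smul_sum]
        rw [← Finset.sum_sub_distrib]
        congr 1; funext i
        rw [sub_smul, smul_smul]
      rw [this, hb, hasum, smul_zero, sub_zero]
    intro i
    exact sub_eq_zero.mp (vanish (fun i => b i - s * a i) i0 h0 hsum i)
  -- representation supported on S for members of span (p '' S)
  have hmem : ∀ (S : Finset (Fin (n-1))) (v : V),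
      v ∈ Submodule.span ℂ (p '' (S : Set (Fin (n-1)))) →
      ∃ d : Fin (n-1) → ℂ, (∀ i, i ∉ S → d i = 0) ∧ (∑ i, d i • p i) = v := by
    intro S v hv
    rw [Set.image_eq_range] at hv
    obtain ⟨c, hc⟩ := (Submodule.mem_span_range_iff_exists_fun ℂ).mp hv
    refine ⟨fun i => if h : i ∈ S then c ⟨i, h⟩ else 0, fun i hi => dif_neg hi, ?_⟩
    rw [← hc]
    have h1 : (∑ i, (if h : i ∈ S then c ⟨i, h⟩ else 0) • p i)
        = ∑ x ∈ S, (if h : x ∈ S then c ⟨x, h⟩ else 0) • p x :=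
      (Finset.sum_subset (Finset.subset_univ S)
        (fun x _ hx => by rw [dif_neg hx, zero_smul])).symm
    rw [h1, ← Finset.sum_coe_sort S
      (fun x => (if h : x ∈ S then c ⟨x, h⟩ else 0) • p x)]
    refine Finset.sum_congr rfl fun x _ => ?_
    have hx := x.2
    simp [hx]
  -- the t-function attached to a nonzero vector
  have hTfun : ∀ v : V, v ≠ 0 → ∃ t : Fin (n-1) → ℂ,
      (∀ i j : Fin (n-1), i ≠ j →
        v ∈ Submodule.span ℂ (p '' ((({i,j} : Finset (Fin (n-1)))ᶜ : Finset (Fin (n-1))) : Set (Fin (n-1)))) →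
        t i = t j) ∧ (∃ i j : Fin (n-1), t i ≠ t j) := by
    intro v hv
    obtain ⟨c, hc⟩ := hrep v
    refine ⟨fun i => c i / a i, ?_, ?_⟩
    · intro i j hij hvm
      obtain ⟨d, hd0, hd⟩ := hmem _ v hvm
      obtain ⟨s, hs⟩ := hrelmul (fun i => c i - d i) (by
        have : (∑ i, (c i - d i) • p i) = (∑ i, c i • p i) - (∑ i, d i • p i) := by
          rw [← Finset.sum_sub_distrib]
          exact Finset.sum_congr rfl fun i _ => sub_smul _ _ _
        rw [this, hc, hd, sub_self])
      have hdi : d i = 0 := hd0 i (by simp)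
      have hdj : d j = 0 := hd0 j (by simp)
      have h1 : c i = s * a i := by
        have := hs i; rw [hdi, sub_zero] at this; exact this
      have h2 : c j = s * a j := by
        have := hs j; rw [hdj, sub_zero] at this; exact this
      show c i / a i = c j / a j
      rw [h1, h2, mul_div_cancel_right₀ _ (ha i), mul_div_cancel_right₀ _ (ha j)]
    · by_contra hcon
      push_neg at hcon
      apply hv
      have hci : ∀ i, c i = (c i0 / a i0) * a i := by
        intro i
        have := hcon i i0
        rw [div_eq_iff (ha i)] at this
        exact this
      rw [← hc]
      have : (∑ i, c i • p i) = (c i0 / a i0) • ∑ i, a i • p i := by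
        rw [Finset.smul_sum]
        exact Finset.sum_congr rfl fun i _ => by rw [hci i, mul_smul]
      rw [this, hasum, smul_zero]
  -- cardinality of the complements
  have hScard : ∀ i j : Fin (n-1), i ≠ j →
      (({i,j} : Finset (Fin (n-1)))ᶜ).card = n - 3 := by
    intro i j hij
    rw [Finset.card_compl, Finset.card_pair hij, hcard]
    omega
  -- the hyperplanes
  set H : Fin (n-1) → Fin (n-1) → Submodule ℂ V := fun i j =>
    Submodule.span ℂ (p '' ((({i,j} : Finset (Fin (n-1)))ᶜ : Finset (Fin (n-1))) : Set (Fin (n-1)))) with hHdef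
  have hHrank : ∀ i j : Fin (n-1), i ≠ j → Module.finrank ℂ (H i j) = n - 3 := by
    intro i j hij
    have li := li_sub (({i,j} : Finset (Fin (n-1)))ᶜ) (by rw [hScard i j hij]; omega)
    have hfr := finrank_span_eq_card li
    rw [Fintype.card_coe, hScard i j hij] at hfr
    have hgoal : Module.finrank ℂ (Submodule.span ℂ
        (p '' ((({i,j} : Finset (Fin (n-1)))ᶜ : Finset (Fin (n-1))) : Set (Fin (n-1))))) = n - 3 := by
      rw [Set.image_eq_range]
      exact hfr
    exact hgoal
  by_cases hcase : ∃ i j : Fin (n-1), i ≠ j ∧ L ≤ H i j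
  · -- L is contained in a hyperplane: any three lines in L work
    obtain ⟨i, j, hij, hLH⟩ := hcase
    obtain b := Module.finBasisOfFinrankEq ℂ L hL
    set x : V := (b 0 : V) with hxdef
    set y : V := (b 1 : V) with hydef
    have hxL : x ∈ L := (b 0).2
    have hyL : y ∈ L := (b 1).2
    have li2 : LinearIndependent ℂ (fun i : Fin 2 => ((b i : V))) :=
      b.linearIndependent.map' L.subtype (Submodule.ker_subtype L)
    have hpair : ∀ s t : ℂ, s • x + t • y = 0 → s = 0 ∧ t = 0 := by
      intro s t hst
      have := Fintype.linearIndependent_iff.mp li2 ![s, t] (by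
        rw [Fin.sum_univ_two]
        simpa using hst)
      exact ⟨by simpa using this 0, by simpa using this 1⟩
    have hx0 : x ≠ 0 := by
      intro h
      have := (hpair 1 0 (by rw [h]; simp)).1
      norm_num at this
    have hy0 : y ≠ 0 := by
      intro h
      have := (hpair 0 1 (by rw [h]; simp)).2
      norm_num at this
    have hxy0 : x + y ≠ 0 := by
      intro h
      have := (hpair 1 1 (by rw [one_smul, one_smul]; exact h)).1
      norm_num at this
    have hd12 : Submodule.span ℂ {x} ≠ Submodule.span ℂ {y} := by
      intro h
      obtain ⟨c, hcy⟩ := Submodule.mem_span_singleton.mp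
        (h ▸ Submodule.mem_span_singleton_self x)
      -- c • y = x
      have := (hpair 1 (-c) (by rw [one_smul, neg_smul, ← hcy]; abel)).1
      norm_num at this
    have hd13 : Submodule.span ℂ {x} ≠ Submodule.span ℂ {x + y} := by
      intro h
      obtain ⟨c, hcy⟩ := Submodule.mem_span_singleton.mp
        (h.symm ▸ Submodule.mem_span_singleton_self (x + y))
      -- c • x = x + y
      have := (hpair (c - 1) (-1) (by
        rw [sub_smul, one_smul, neg_smul, one_smul, hcy]; abel)).2
      norm_num at this
    have hd23 : Submodule.span ℂ {y} ≠ Submodule.span ℂ {x + y} := by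
      intro h
      obtain ⟨c, hcy⟩ := Submodule.mem_span_singleton.mp
        (h.symm ▸ Submodule.mem_span_singleton_self (x + y))
      -- c • y = x + y
      have := (hpair (-1) (c - 1) (by
        rw [sub_smul, one_smul, neg_smul, one_smul, hcy]; abel)).1
      norm_num at this
    have hmkP : ∀ z : V, z ≠ 0 → z ∈ L → P (Submodule.span ℂ {z}) := by
      intro z hz hzL
      refine ⟨finrank_span_singleton hz, (Submodule.span_singleton_le_iff_mem z L).mpr hzL,
        ({i,j} : Finset (Fin (n-1)))ᶜ, hScard i j hij, ?_⟩
      exact le_trans ((Submodule.span_singleton_le_iff_mem z L).mpr hzL) hLH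
    exact ⟨_, _, _, hd12, hd13, hd23, hmkP x hx0 hxL, hmkP y hy0 hyL,
      hmkP (x + y) hxy0 (L.add_mem hxL hyL)⟩
  · -- no hyperplane contains L : each L ⊓ H i j is a line
    push_neg at hcase
    have hline : ∀ i j : Fin (n-1), i ≠ j →
        Module.finrank ℂ (L ⊓ H i j : Submodule ℂ V) = 1 := by
      intro i j hij
      have hsum := Submodule.finrank_sup_add_finrank_inf_eq L (H i j)
      rw [hL, hHrank i j hij] at hsum
      have hle1 : Module.finrank ℂ (L ⊔ H i j : Submodule ℂ V) ≤ n - 2 := by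
        rw [← hdim]; exact Submodule.finrank_le _
      have hle2 : Module.finrank ℂ (L ⊓ H i j : Submodule ℂ V) ≤ 2 := by
        rw [← hL]; exact Submodule.finrank_mono inf_le_left
      have hne2 : Module.finrank ℂ (L ⊓ H i j : Submodule ℂ V) ≠ 2 := by
        intro heq
        exact hcase i j hij (inf_eq_left.mp
          (Submodule.eq_of_le_of_finrank_eq inf_le_left (heq.trans hL.symm)))
      omega
    have hPij : ∀ i j : Fin (n-1), i ≠ j → P (L ⊓ H i j) := by
      intro i j hij
      exact ⟨hline i j hij, inf_le_left,
        ({i,j} : Finset (Fin (n-1)))ᶜ, hScard i j hij, inf_le_right⟩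
    by_contra hno
    have key : ∀ l1 l2 l3 : Submodule ℂ V, P l1 → P l2 → P l3 →
        (l1 = l2 ∨ l1 = l3 ∨ l2 = l3) := by
      intro l1 l2 l3 p1 p2 p3
      by_contra hcon
      push_neg at hcon
      exact hno ⟨l1, l2, l3, hcon.1, hcon.2.1, hcon.2.2, p1, p2, p3⟩
    -- a nonzero vector in a line
    have hvec : ∀ i j : Fin (n-1), i ≠ j →
        ∃ v : V, v ≠ 0 ∧ v ∈ (L ⊓ H i j : Submodule ℂ V) := by
      intro i j hij
      have hne : (L ⊓ H i j : Submodule ℂ V) ≠ ⊥ := by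
        intro h
        have := hline i j hij
        rw [h] at this
        simp [finrank_bot] at this
      obtain ⟨v, hvmem, hv0⟩ := (Submodule.ne_bot_iff _).mp hne
      exact ⟨v, hv0, hvmem⟩
    obtain ⟨v1, hv10, hv1m⟩ := hvec i0 i1 h01
    obtain ⟨t1, ht1, hnc1⟩ := hTfun v1 hv10
    by_cases hall : ∀ i j : Fin (n-1), i ≠ j → L ⊓ H i j = L ⊓ H i0 i1
    · -- all lines equal : t1 is constant, contradiction
      obtain ⟨i, j, hij⟩ := hnc1
      have hne : i ≠ j := by
        intro h; exact hij (by rw [h])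
      apply hij
      apply ht1 i j hne
      have : v1 ∈ (L ⊓ H i j : Submodule ℂ V) := (hall i j hne) ▸ hv1m
      exact this.2
    · push_neg at hall
      obtain ⟨i2, j2, hij2, hne12⟩ := hall
      obtain ⟨v2, hv20, hv2m⟩ := hvec i2 j2 hij2
      obtain ⟨t2, ht2, hnc2⟩ := hTfun v2 hv20
      have hedge : ∀ i j : Fin (n-1), i ≠ j → t1 i = t1 j ∨ t2 i = t2 j := by
        intro i j hij
        rcases key (L ⊓ H i j) (L ⊓ H i0 i1) (L ⊓ H i2 j2)
          (hPij i j hij) (hPij i0 i1 h01) (hPij i2 j2 hij2) with h | h | h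
        · left
          apply ht1 i j hij
          exact (h ▸ hv1m : v1 ∈ (L ⊓ H i j : Submodule ℂ V)).2
        · right
          apply ht2 i j hij
          exact (h ▸ hv2m : v2 ∈ (L ⊓ H i j : Submodule ℂ V)).2
        · exact absurd h hne12.symm
      obtain ⟨A, B, hAB⟩ := hnc1
      have hABne : A ≠ B := fun h => hAB (by rw [h])
      have hAB2 : t2 A = t2 B := (hedge A B hABne).resolve_left hAB
      have hconst : ∀ x : Fin (n-1), t2 x = t2 A := by
        intro x
        by_cases hxA : x = A
        · rw [hxA]
        by_cases hxB : x = B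
        · rw [hxB, ← hAB2]
        rcases hedge x A hxA with h1 | h1
        · rcases hedge x B hxB with h2 | h2
          · exact absurd (h1.symm.trans h2) hAB
          · rw [h2, ← hAB2]
        · exact h1
      obtain ⟨i, j, hij⟩ := hnc2
      exact hij ((hconst i).trans (hconst j).symm)
end

section
/- Let n ≥ 5, let V be a ℂ-vector space with dim_ℂ V = n−2, and let p : Fin(n−1) → V be in linear general position. Then for any two nonzero vectors a₁, a₂ ∈ V, there exists a subset S ⊆ Fin(n−1) with |S| = n−3 such that a₁ ∉ H_S and a₂ ∉ H_S. (Equivalently: no two points of ℙ^{n−3} together meet every hyperplane of the arrangement; this is the key step, proved by contradiction, in showing the arrangement is in hyperbolic-imbedding configuration.) -/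
/-!
Join `i` and `j` in a graph on the indices when `a` lies on the hyperplane spanned by all points
but `p i` and `p j`. If `a` lies in the spans of the points outside `A` and outside `B`, where `A`
and `B` share an index `i`, both spans come from the independent family of all points but `p i`,
so `a` lies in the span of the points outside `A ∪ B`. Along a connected graph this reaches the
empty span, so the graph of a nonzero vector is disconnected. If no hyperplane avoided both `a₁`
and `a₂`, their graphs would together contain every edge; but a graph or its complement is
connected.
-/

open Submodule

theorem LinearIndepOn.span_image_inter_eq {R M ι : Type*} [Semiring R] [AddCommMonoid M]
    [Module R M] {v : ι → M} {u s t : Set ι} (hv : LinearIndepOn R v u) (hs : s ⊆ u)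
    (ht : t ⊆ u) : span R (v '' (s ∩ t)) = span R (v '' s) ⊓ span R (v '' t) := by
  refine le_antisymm (le_inf (span_mono (Set.image_mono Set.inter_subset_left))
    (span_mono (Set.image_mono Set.inter_subset_right))) ?_
  rintro x ⟨hxs, hxt⟩
  obtain ⟨l, hl, rfl⟩ := (Finsupp.mem_span_image_iff_linearCombination R).1 hxs
  obtain ⟨l', hl', hll'⟩ := (Finsupp.mem_span_image_iff_linearCombination R).1 hxt
  obtain rfl : l = l' :=
    linearIndepOn_iffₛ.1 hv _ (Finsupp.supported_mono hs hl) _ (Finsupp.supported_mono ht hl')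
      hll'.symm
  refine (Finsupp.mem_span_image_iff_linearCombination R).2 ⟨l, ?_, rfl⟩
  rw [Finsupp.supported_inter]
  exact ⟨hl, hl'⟩

theorem SimpleGraph.Connected.univ_mem_of_adj_mem_of_union_mem {ι : Type*} [Finite ι]
    [Nontrivial ι] {G : SimpleGraph ι} (hG : G.Connected) {F : Set (Set ι)}
    (hadj : ∀ i j, G.Adj i j → {i, j} ∈ F)
    (hunion : ∀ A ∈ F, ∀ B ∈ F, (A ∩ B).Nonempty → A ∪ B ∈ F) : Set.univ ∈ F := by
  obtain ⟨u, w, huw⟩ : ∃ u w, G.Adj u w :=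
    ⟨Classical.arbitrary ι, hG.preconnected.exists_adj_of_nontrivial _⟩
  obtain ⟨M, huwM, hM⟩ := Finite.exists_le_maximal (p := (· ∈ F)) (hadj u w huw)
  have huM : u ∈ M := huwM (Set.mem_insert u {w})
  suffices M = Set.univ from this ▸ hM.prop
  refine Set.eq_univ_of_forall fun x ↦ by_contra fun hxM ↦ ?_
  obtain ⟨d, -, hd, hd'⟩ := (hG.preconnected u x).some.exists_boundary_dart M huM hxM
  have hgrow : M ∪ {d.fst, d.snd} ∈ F :=
    hunion M hM.prop _ (hadj _ _ d.adj) ⟨d.fst, hd, Set.mem_insert _ _⟩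
  exact hd' (hM.2 hgrow Set.subset_union_left (Or.inr (Set.mem_insert_of_mem _ rfl)))

section HyperplaneGraph

variable (R : Type*) {V ι : Type*} [Semiring R] [AddCommMonoid V] [Module R V]

def hyperplaneGraph (p : ι → V) (a : V) : SimpleGraph ι where
  Adj i j := i ≠ j ∧ a ∈ span R (p '' ({i, j}ᶜ : Set ι))
  symm := ⟨fun _ _ h ↦ ⟨h.1.symm, Set.pair_comm .. ▸ h.2⟩⟩
  loopless := ⟨fun _ h ↦ h.1 rfl⟩

variable {R} {p : ι → V}

theorem mem_span_image_compl_union (hp : ∀ i, LinearIndepOn R p {i}ᶜ) {A B : Set ι}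
    (hAB : (A ∩ B).Nonempty) {a : V} (hA : a ∈ span R (p '' Aᶜ))
    (hB : a ∈ span R (p '' Bᶜ)) : a ∈ span R (p '' (A ∪ B)ᶜ) := by
  obtain ⟨i, hiA, hiB⟩ := hAB
  rw [Set.compl_union, (hp i).span_image_inter_eq (Set.compl_subset_compl_of_subset
    (Set.singleton_subset_iff.2 hiA)) (Set.compl_subset_compl_of_subset
    (Set.singleton_subset_iff.2 hiB))]
  exact ⟨hA, hB⟩

theorem eq_zero_of_connected_hyperplaneGraph [Finite ι] [Nontrivial ι]
    (hp : ∀ i, LinearIndepOn R p {i}ᶜ) {a : V} (hG : (hyperplaneGraph R p a).Connected) :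
    a = 0 := by
  have huniv := hG.univ_mem_of_adj_mem_of_union_mem (F := {A | a ∈ span R (p '' Aᶜ)})
    (fun _ _ h ↦ h.2) (fun _ hA _ hB hAB ↦ mem_span_image_compl_union hp hAB hA hB)
  simpa using huniv

theorem exists_pair_notMem_span_image_compl [Finite ι] [Nontrivial ι]
    (hp : ∀ i, LinearIndepOn R p {i}ᶜ) {a₁ a₂ : V}
    (ha₁ : a₁ ≠ 0) (ha₂ : a₂ ≠ 0) :
    ∃ i j, i ≠ j ∧ a₁ ∉ span R (p '' ({i, j}ᶜ : Set ι)) ∧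
      a₂ ∉ span R (p '' ({i, j}ᶜ : Set ι)) := by
  by_contra! h
  have hcompl : (hyperplaneGraph R p a₁)ᶜ ≤ hyperplaneGraph R p a₂ :=
    fun i j hij ↦ ⟨hij.1, h i j hij.1 fun ha ↦ hij.2 ⟨hij.1, ha⟩⟩
  rcases (hyperplaneGraph R p a₁).connected_or_connected_compl with hG | hG
  · exact ha₁ (eq_zero_of_connected_hyperplaneGraph hp hG)
  · exact ha₂ (eq_zero_of_connected_hyperplaneGraph hp (hG.mono hcompl))

end HyperplaneGraph

theorem exists_hyperplane_avoiding_two_points_general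
    (n : ℕ) (hn : 5 ≤ n) (V : Type*) [AddCommGroup V] [Module ℂ V]
    (p : Fin (n - 1) → V)
    (hgen : ∀ T : Finset (Fin (n - 1)), T.card = n - 2 →
      LinearIndependent ℂ (fun i : T => p (i : Fin (n - 1)))) :
    ∀ a₁ a₂ : V, a₁ ≠ 0 → a₂ ≠ 0 →
      ∃ S : Finset (Fin (n - 1)), S.card = n - 3 ∧
        a₁ ∉ Submodule.span ℂ (p '' (S : Set (Fin (n - 1)))) ∧
        a₂ ∉ Submodule.span ℂ (p '' (S : Set (Fin (n - 1)))) := by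
  intro a₁ a₂ ha₁ ha₂
  have : Nontrivial (Fin (n - 1)) := Fin.nontrivial_iff_two_le.2 (by omega)
  have hp (i : Fin (n - 1)) : LinearIndepOn ℂ p {i}ᶜ := by
    have h : LinearIndepOn ℂ p (({i}ᶜ : Finset _) : Set _) := hgen {i}ᶜ <| by
      rw [Finset.card_compl, Fintype.card_fin, Finset.card_singleton]; omega
    simpa using h
  obtain ⟨i, j, hij, h₁, h₂⟩ := exists_pair_notMem_span_image_compl hp ha₁ ha₂
  refine ⟨{i, j}ᶜ, ?_, by push_cast; exact h₁, by push_cast; exact h₂⟩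
  rw [Finset.card_compl, Fintype.card_fin, Finset.card_pair hij]
  omega

/-- for any two nonzero vectors there is an arrangement hyperplane
H_S (|S| = n-3) avoiding both. -/
theorem exists_hyperplane_avoiding_two_points
    (n : ℕ) (hn : 5 ≤ n) (V : Type*) [AddCommGroup V] [Module ℂ V]
    [FiniteDimensional ℂ V] (hdim : Module.finrank ℂ V = n - 2)
    (p : Fin (n - 1) → V)
    (hgen : ∀ T : Finset (Fin (n - 1)), T.card = n - 2 →
      LinearIndependent ℂ (fun i : T => p (i : Fin (n - 1)))) :
    ∀ a₁ a₂ : V, a₁ ≠ 0 → a₂ ≠ 0 →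
      ∃ S : Finset (Fin (n - 1)), S.card = n - 3 ∧
        a₁ ∉ Submodule.span ℂ (p '' (S : Set (Fin (n - 1)))) ∧
        a₂ ∉ Submodule.span ℂ (p '' (S : Set (Fin (n - 1)))) :=
  exists_hyperplane_avoiding_two_points_general n hn V p hgen
end

section
/- Let n ≥ 5, let V be a ℂ-vector space with dim_ℂ V = n−2, and let p : Fin(n−1) → V be in linear general position. Fix an integer r with 2 ≤ r ≤ n−3 and a subset T ⊆ Fin(n−1) with |T| = n−2−r (so Z = span_ℂ {p_i : i ∈ T} is a linear blow-up center of codimension r). Then the number of subsets S ⊆ Fin(n−1) with |S| = n−3 and span_ℂ {p_i : i ∈ T} ≤ H_S is exactly C(r+1, r−1) = r(r+1)/2, and this number is strictly greater than r. (This is the multiplicity of the hyperplane arrangement H along the blow-up center, which exceeds the codimension of the center.) -/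
/-- the multiplicity of the arrangement along a linear blow-up center of
codimension r is C(r+1, r-1) = r(r+1)/2 > r. -/
theorem multiplicity_along_center
    (n : ℕ) (hn : 5 ≤ n) (V : Type*) [AddCommGroup V] [Module ℂ V]
    [FiniteDimensional ℂ V] (hdim : Module.finrank ℂ V = n - 2)
    (p : Fin (n - 1) → V)
    (hgen : ∀ T : Finset (Fin (n - 1)), T.card = n - 2 →
      LinearIndependent ℂ (fun i : T => p (i : Fin (n - 1))))
    (r : ℕ) (hr2 : 2 ≤ r) (hrn : r ≤ n - 3)
    (T : Finset (Fin (n - 1))) (hT : T.card = n - 2 - r) :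
    {S : Finset (Fin (n - 1)) | S.card = n - 3 ∧
        Submodule.span ℂ (p '' (T : Set (Fin (n - 1)))) ≤
          Submodule.span ℂ (p '' (S : Set (Fin (n - 1))))}.ncard
      = Nat.choose (r + 1) (r - 1) ∧
    Nat.choose (r + 1) (r - 1) = r * (r + 1) / 2 ∧
    r < Nat.choose (r + 1) (r - 1) := by
  have hchoose : Nat.choose (r + 1) (r - 1) = r * (r + 1) / 2 := by
    have h1 : r - 1 = (r + 1) - 2 := by omega
    rw [h1, Nat.choose_symm (by omega), Nat.choose_two_right]
    simp [Nat.mul_comm]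
  refine ⟨?_, hchoose, ?_⟩
  · -- key : span condition iff T ⊆ S
    have key : ∀ S : Finset (Fin (n - 1)), S.card = n - 3 →
        ((Submodule.span ℂ (p '' (T : Set (Fin (n - 1)))) ≤
          Submodule.span ℂ (p '' (S : Set (Fin (n - 1))))) ↔ T ⊆ S) := by
      intro S hS
      constructor
      · intro hle
        by_contra hsub
        obtain ⟨i, hiT, hiS⟩ := Finset.not_subset.mp hsub
        have hpi : p i ∈ Submodule.span ℂ (p '' (S : Set (Fin (n - 1)))) :=
          hle (Submodule.subset_span ⟨i, hiT, rfl⟩)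
        set S' : Finset (Fin (n - 1)) := insert i S with hS'
        have hcard : S'.card = n - 2 := by
          rw [Finset.card_insert_of_notMem hiS]; omega
        have hli := hgen S' hcard
        have hiS' : i ∈ S' := Finset.mem_insert_self i S
        -- view as family on subtype
        have hnot : p i ∉ Submodule.span ℂ
            ((fun j : S' => p (j : Fin (n - 1))) '' {j : S' | (j : Fin (n - 1)) ∈ S}) := by
          have := hli.notMem_span_image (x := ⟨i, hiS'⟩)
            (s := {j : S' | (j : Fin (n - 1)) ∈ S}) (by simpa using hiS)
          simpa using this
        apply hnot
        have himg : ((fun j : S' => p (j : Fin (n - 1))) ''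
            {j : S' | (j : Fin (n - 1)) ∈ S}) = p '' (S : Set (Fin (n - 1))) := by
          ext x
          constructor
          · rintro ⟨⟨j, hj⟩, hjS, rfl⟩; exact ⟨j, hjS, rfl⟩
          · rintro ⟨j, hjS, rfl⟩
            exact ⟨⟨j, Finset.mem_insert_of_mem hjS⟩, hjS, rfl⟩
        rw [himg]; exact hpi
      · intro hTS
        exact Submodule.span_mono (Set.image_mono (f := p) (by exact_mod_cast hTS))
    have hset : {S : Finset (Fin (n - 1)) | S.card = n - 3 ∧
        Submodule.span ℂ (p '' (T : Set (Fin (n - 1)))) ≤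
          Submodule.span ℂ (p '' (S : Set (Fin (n - 1))))} =
        ↑(Finset.univ.filter (fun S : Finset (Fin (n - 1)) => S.card = n - 3 ∧ T ⊆ S)) := by
      ext S
      simp only [Set.mem_setOf_eq, Finset.coe_filter, Finset.mem_univ, true_and,
        Set.mem_setOf_eq]
      constructor
      · rintro ⟨h1, h2⟩; exact ⟨h1, (key S h1).mp h2⟩
      · rintro ⟨h1, h2⟩; exact ⟨h1, (key S h1).mpr h2⟩
    rw [hset, Set.ncard_coe_finset]
    -- count via bijection S ↦ S \ T with powersetCard (r-1) Tᶜ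
    have hTcompl : Tᶜ.card = r + 1 := by
      rw [Finset.card_compl, Fintype.card_fin, hT]; omega
    rw [show Nat.choose (r + 1) (r - 1) = ((Finset.powersetCard (r - 1) Tᶜ).card : ℕ) by
      rw [Finset.card_powersetCard, hTcompl]]
    apply Finset.card_bij' (fun S _ => S \ T) (fun u _ => u ∪ T)
    · intro S hS
      simp only [Finset.mem_filter, Finset.mem_univ, true_and] at hS
      rw [Finset.mem_powersetCard]
      refine ⟨fun x hx => ?_, ?_⟩
      · simp only [Finset.mem_sdiff] at hx
        simpa using hx.2
      · rw [Finset.card_sdiff_of_subset hS.2, hS.1, hT]; omega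
    · intro u hu
      rw [Finset.mem_powersetCard] at hu
      simp only [Finset.mem_filter, Finset.mem_univ, true_and]
      have hdisj : Disjoint u T := by
        rw [Finset.disjoint_left]
        intro x hxu hxT
        have := hu.1 hxu
        simp only [Finset.mem_compl] at this
        exact this hxT
      refine ⟨?_, Finset.subset_union_right⟩
      rw [Finset.card_union_of_disjoint hdisj, hu.2, hT]; omega
    · intro S hS
      simp only [Finset.mem_filter, Finset.mem_univ, true_and] at hS
      exact Finset.sdiff_union_of_subset hS.2
    · intro u hu
      rw [Finset.mem_powersetCard] at hu
      rw [Finset.union_sdiff_right, Finset.sdiff_eq_self_iff_disjoint]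
      rw [Finset.disjoint_left]
      intro x hxu hxT
      have := hu.1 hxu
      simp only [Finset.mem_compl] at this
      exact this hxT
  · rw [hchoose]
    have h : 2 * (r + 1) ≤ r * (r + 1) := by nlinarith
    omega
end
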